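/- arXiv:2603.20665 — 3 statements merged into one kernel-verified Lean document; each statement's English description precedes it below -/
import Mathlib

section
/- Let Q : Λ → 𝒟 be measurable, μ a σ-finite measure on Λ, and P, R probability measures on Λ whose pushforwards QP and QR have densities p and r with respect to a σ-finite measure ν on 𝒟. If ρ_p is a probability density on Λ with respect to μ such that the pushforward of the measure ρ_p dμ by Q has ν-density τ with τ > 0 ν-a.e., then the functions λ ↦ p(Q(λ))·ρ_p(λ)/τ(Q(λ)) and λ ↦ r(Q(λ))·ρ_p(λ)/τ(Q(λ)) are probability densities with respect to μ, and the total variation distance between the corresponding probability measures equals the total variation distance between QP and QR. -/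
/-!
Write `g • m` for the measure with density `g` with respect to `m`, and `π = ρ_p • μ`. Then
`p̂ • μ = ((p / τ) ∘ Q) • π`, and `(g ∘ Q) • π` pushes forward under `Q` to `g • Q₊π = (g τ) • ν`;
hence `Q₊(p̂ • μ) = p • ν = Q₊P`. This gives the normalisation and, since pushing forward cannot
increase total variation, one inequality. Conversely, the densities of `p̂ • μ` and `r̂ • μ` with
respect to `π` factor through `Q`, so the Hahn set `{r̂ < p̂}` is a preimage `Q⁻¹ E`, and the
supremum defining the total variation is attained on sets of this form.
-/

open MeasureTheory ENNReal

/-- Total variation distance: supremum over measurable sets. -/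
noncomputable def tvDist {Ω : Type*} [MeasurableSpace Ω] (P R : Measure Ω) : ℝ :=
  ⨆ E : {s : Set Ω // MeasurableSet s}, |(P E.1).toReal - (R E.1).toReal|

section TotalVariation

variable {α β : Type*} [MeasurableSpace α] [MeasurableSpace β]

lemma tvDist_comm (m₁ m₂ : Measure α) : tvDist m₁ m₂ = tvDist m₂ m₁ := by
  simp only [tvDist, abs_sub_comm]

lemma bddAbove_range_abs_sub_toReal (m₁ m₂ : Measure α) [IsFiniteMeasure m₁]
    [IsFiniteMeasure m₂] :
    BddAbove (Set.range fun E : {s : Set α // MeasurableSet s} =>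
      |(m₁ E.1).toReal - (m₂ E.1).toReal|) := by
  refine ⟨(m₁ Set.univ).toReal + (m₂ Set.univ).toReal, ?_⟩
  rintro _ ⟨E, rfl⟩
  have h₁ := ENNReal.toReal_mono (measure_ne_top m₁ _) (measure_mono (Set.subset_univ E.1))
  have h₂ := ENNReal.toReal_mono (measure_ne_top m₂ _) (measure_mono (Set.subset_univ E.1))
  rw [abs_sub_le_iff]
  constructor <;> linarith [(m₁ E.1).toReal_nonneg, (m₂ E.1).toReal_nonneg]

lemma abs_sub_le_tvDist (m₁ m₂ : Measure α) [IsFiniteMeasure m₁] [IsFiniteMeasure m₂]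
    {s : Set α} (hs : MeasurableSet s) :
    |(m₁ s).toReal - (m₂ s).toReal| ≤ tvDist m₁ m₂ :=
  le_ciSup (bddAbove_range_abs_sub_toReal m₁ m₂) ⟨s, hs⟩

lemma tvDist_le {m₁ m₂ : Measure α} {c : ℝ}
    (h : ∀ s, MeasurableSet s → |(m₁ s).toReal - (m₂ s).toReal| ≤ c) :
    tvDist m₁ m₂ ≤ c :=
  have : Nonempty {s : Set α // MeasurableSet s} := ⟨⟨Set.univ, MeasurableSet.univ⟩⟩
  ciSup_le fun E => h E.1 E.2

lemma tvDist_map_le {f : α → β} (hf : Measurable f) (m₁ m₂ : Measure α) [IsFiniteMeasure m₁]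
    [IsFiniteMeasure m₂] :
    tvDist (m₁.map f) (m₂.map f) ≤ tvDist m₁ m₂ :=
  tvDist_le fun E hE => by
    rw [Measure.map_apply hf hE, Measure.map_apply hf hE]
    exact abs_sub_le_tvDist m₁ m₂ (hf hE)

lemma toReal_withDensity_sub_le_setOf_lt (π : Measure α) {g₁ g₂ : α → ℝ≥0∞}
    (hg₁ : Measurable g₁) (hg₂ : Measurable g₂) [IsFiniteMeasure (π.withDensity g₁)]
    [IsFiniteMeasure (π.withDensity g₂)] {A : Set α} (hA : MeasurableSet A) :
    ((π.withDensity g₁) A).toReal - ((π.withDensity g₂) A).toReal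
      ≤ ((π.withDensity g₁) {x | g₂ x < g₁ x}).toReal
        - ((π.withDensity g₂) {x | g₂ x < g₁ x}).toReal := by
  set S := {x | g₂ x < g₁ x}
  have hS : MeasurableSet S := measurableSet_lt hg₂ hg₁
  have key : (π.withDensity g₁) A + (π.withDensity g₂) S
      ≤ (π.withDensity g₂) A + (π.withDensity g₁) S := by
    simp only [withDensity_apply _ hA, withDensity_apply _ hS, ← lintegral_indicator hA,
      ← lintegral_indicator hS]
    rw [← lintegral_add_left (hg₁.indicator hA), ← lintegral_add_left (hg₂.indicator hA)]
    refine lintegral_mono fun x => ?_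
    by_cases hxS : x ∈ S <;> by_cases hxA : x ∈ A <;>
      simp only [Set.indicator_of_mem, Set.indicator_of_notMem, hxS, hxA, not_false_eq_true,
        add_comm, add_zero, le_refl]
    · exact le_of_lt hxS
    · exact not_lt.1 hxS
  have := (ENNReal.toReal_le_toReal (by finiteness) (by finiteness)).2 key
  rw [ENNReal.toReal_add (by finiteness) (by finiteness),
    ENNReal.toReal_add (by finiteness) (by finiteness)] at this
  linarith

lemma toReal_withDensity_comp_sub_le_tvDist_map (π : Measure α) {Q : α → β}
    (hQ : Measurable Q) {g₁ g₂ : β → ℝ≥0∞} (hg₁ : Measurable g₁) (hg₂ : Measurable g₂)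
    [IsFiniteMeasure (π.withDensity (g₁ ∘ Q))] [IsFiniteMeasure (π.withDensity (g₂ ∘ Q))]
    {A : Set α} (hA : MeasurableSet A) :
    ((π.withDensity (g₁ ∘ Q)) A).toReal - ((π.withDensity (g₂ ∘ Q)) A).toReal
      ≤ tvDist ((π.withDensity (g₁ ∘ Q)).map Q) ((π.withDensity (g₂ ∘ Q)).map Q) := by
  have hE : MeasurableSet {q | g₂ q < g₁ q} := measurableSet_lt hg₂ hg₁
  calc _ ≤ _ := toReal_withDensity_sub_le_setOf_lt π (hg₁.comp hQ) (hg₂.comp hQ) hA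
    _ = (((π.withDensity (g₁ ∘ Q)).map Q) {q | g₂ q < g₁ q}).toReal
          - (((π.withDensity (g₂ ∘ Q)).map Q) {q | g₂ q < g₁ q}).toReal := by
        rw [Measure.map_apply hQ hE, Measure.map_apply hQ hE]; rfl
    _ ≤ _ := (le_abs_self _).trans (abs_sub_le_tvDist _ _ hE)

lemma tvDist_withDensity_comp (π : Measure α) {Q : α → β} (hQ : Measurable Q)
    {g₁ g₂ : β → ℝ≥0∞} (hg₁ : Measurable g₁) (hg₂ : Measurable g₂)
    [IsFiniteMeasure (π.withDensity (g₁ ∘ Q))] [IsFiniteMeasure (π.withDensity (g₂ ∘ Q))] :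
    tvDist (π.withDensity (g₁ ∘ Q)) (π.withDensity (g₂ ∘ Q))
      = tvDist ((π.withDensity (g₁ ∘ Q)).map Q) ((π.withDensity (g₂ ∘ Q)).map Q) := by
  refine le_antisymm (tvDist_le fun A hA => abs_sub_le_iff.2 ⟨?_, ?_⟩) (tvDist_map_le hQ _ _)
  · exact toReal_withDensity_comp_sub_le_tvDist_map π hQ hg₁ hg₂ hA
  · rw [tvDist_comm]
    exact toReal_withDensity_comp_sub_le_tvDist_map π hQ hg₂ hg₁ hA

end TotalVariation

namespace MeasureTheory

variable {α β : Type*} [MeasurableSpace α] [MeasurableSpace β]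

lemma map_withDensity_comp (π : Measure α) {Q : α → β} (hQ : Measurable Q) {g : β → ℝ≥0∞}
    (hg : Measurable g) :
    (π.withDensity (g ∘ Q)).map Q = (π.map Q).withDensity g := by
  ext1 E hE
  rw [Measure.map_apply hQ hE, withDensity_apply _ (hQ hE), withDensity_apply _ hE,
    setLIntegral_map hE hg hQ]
  rfl

lemma withDensity_withDensity_div (ν : Measure β) {τ f : β → ℝ≥0∞} (hτ : Measurable τ)
    (hf : Measurable f) (hτ₀ : ∀ᵐ q ∂ν, τ q ≠ 0) (hτ_top : ∀ᵐ q ∂ν, τ q ≠ ∞) :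
    (ν.withDensity τ).withDensity (f / τ) = ν.withDensity f := by
  rw [← withDensity_mul ν hτ (hf.div hτ)]
  refine withDensity_congr_ae ?_
  filter_upwards [hτ₀, hτ_top] with q h₀ h_top
  exact ENNReal.mul_div_cancel h₀ h_top

lemma withDensity_mul_div_comp (μ : Measure α) {ρ : α → ℝ≥0∞} (hρ : Measurable ρ)
    {Q : α → β} (hQ : Measurable Q) {f τ : β → ℝ≥0∞} (hf : Measurable f) (hτ : Measurable τ) :
    μ.withDensity (fun l => f (Q l) * ρ l / τ (Q l))
      = (μ.withDensity ρ).withDensity ((f / τ) ∘ Q) := by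
  rw [← withDensity_mul μ hρ ((hf.div hτ).comp hQ)]
  congr 1
  funext l
  simp only [Pi.mul_apply, Function.comp_apply, div_eq_mul_inv, Pi.inv_apply]
  ring

end MeasureTheory

theorem scp_density_and_tv_eq_general
    {Λ 𝒟 : Type*} [MeasurableSpace Λ] [MeasurableSpace 𝒟]
    (Q : Λ → 𝒟) (hQ : Measurable Q)
    (μ : Measure Λ) (ν : Measure 𝒟)
    (P R : Measure Λ) [IsProbabilityMeasure P] [IsProbabilityMeasure R]
    (p r : 𝒟 → ℝ≥0∞) (hp : Measurable p) (hr : Measurable r)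
    (hPmap : P.map Q = ν.withDensity p) (hRmap : R.map Q = ν.withDensity r)
    (ρp : Λ → ℝ≥0∞) (hρp : Measurable ρp) (hρp1 : ∫⁻ l, ρp l ∂μ = 1)
    (τ : 𝒟 → ℝ≥0∞) (hτ : Measurable τ)
    (hτmap : (μ.withDensity ρp).map Q = ν.withDensity τ)
    (hτpos : ∀ᵐ q ∂ν, 0 < τ q) :
    (∫⁻ l, p (Q l) * ρp l / τ (Q l) ∂μ = 1) ∧
    (∫⁻ l, r (Q l) * ρp l / τ (Q l) ∂μ = 1) ∧
    tvDist (μ.withDensity (fun l => p (Q l) * ρp l / τ (Q l)))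
           (μ.withDensity (fun l => r (Q l) * ρp l / τ (Q l)))
      = tvDist (P.map Q) (R.map Q) := by
  set π := μ.withDensity ρp
  have hτ_int : ∫⁻ q, τ q ∂ν = 1 := by
    rw [← setLIntegral_univ, ← withDensity_apply _ .univ, ← hτmap,
      Measure.map_apply hQ .univ, Set.preimage_univ, withDensity_apply _ .univ,
      setLIntegral_univ, hρp1]
  have hτ_top : ∀ᵐ q ∂ν, τ q ≠ ∞ :=
    (ae_lt_top hτ (by rw [hτ_int]; exact one_ne_top)).mono fun _ h => h.ne
  have hτ₀ : ∀ᵐ q ∂ν, τ q ≠ 0 := hτpos.mono fun _ h => h.ne'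
  have hmap {f : 𝒟 → ℝ≥0∞} (hf : Measurable f) :
      (π.withDensity ((f / τ) ∘ Q)).map Q = ν.withDensity f := by
    rw [map_withDensity_comp π hQ (hf.div hτ), hτmap,
      withDensity_withDensity_div ν hτ hf hτ₀ hτ_top]
  have hprob {f : 𝒟 → ℝ≥0∞} (hf : Measurable f) {X : Measure Λ} [IsProbabilityMeasure X]
      (hX : X.map Q = ν.withDensity f) : IsProbabilityMeasure (π.withDensity ((f / τ) ∘ Q)) := by
    have : IsProbabilityMeasure ((π.withDensity ((f / τ) ∘ Q)).map Q) := by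
      rw [hmap hf, ← hX]; exact Measure.isProbabilityMeasure_map hQ.aemeasurable
    exact Measure.isProbabilityMeasure_of_map Q
  have := hprob hp hPmap
  have := hprob hr hRmap
  simp only [← setLIntegral_univ (μ := μ), ← withDensity_apply _ MeasurableSet.univ,
    withDensity_mul_div_comp μ hρp hQ hp hτ, withDensity_mul_div_comp μ hρp hQ hr hτ]
  refine ⟨measure_univ, measure_univ, ?_⟩
  rw [tvDist_withDensity_comp π hQ (hp.div hτ) (hr.div hτ), hmap hp, hmap hr, hPmap, hRmap]

/-- the SCP densities are probability densities and the TV distance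
between the SCP solutions equals the TV distance of the pushforwards. -/
theorem scp_density_and_tv_eq
    {Λ 𝒟 : Type*} [MeasurableSpace Λ] [MeasurableSpace 𝒟]
    (Q : Λ → 𝒟) (hQ : Measurable Q)
    (μ : Measure Λ) [SigmaFinite μ] (ν : Measure 𝒟) [SigmaFinite ν]
    (P R : Measure Λ) [IsProbabilityMeasure P] [IsProbabilityMeasure R]
    (p r : 𝒟 → ℝ≥0∞) (hp : Measurable p) (hr : Measurable r)
    (hPmap : P.map Q = ν.withDensity p) (hRmap : R.map Q = ν.withDensity r)
    (ρp : Λ → ℝ≥0∞) (hρp : Measurable ρp) (hρp1 : ∫⁻ l, ρp l ∂μ = 1)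
    (τ : 𝒟 → ℝ≥0∞) (hτ : Measurable τ)
    (hτmap : (μ.withDensity ρp).map Q = ν.withDensity τ)
    (hτpos : ∀ᵐ q ∂ν, 0 < τ q) :
    (∫⁻ l, p (Q l) * ρp l / τ (Q l) ∂μ = 1) ∧
    (∫⁻ l, r (Q l) * ρp l / τ (Q l) ∂μ = 1) ∧
    tvDist (μ.withDensity (fun l => p (Q l) * ρp l / τ (Q l)))
           (μ.withDensity (fun l => r (Q l) * ρp l / τ (Q l)))
      = tvDist (P.map Q) (R.map Q) :=
  scp_density_and_tv_eq_general Q hQ μ ν P R p r hp hr hPmap hRmap ρp hρp hρp1 τ hτ hτmap hτpos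
end

section
/- Let {Pᵢ} be a sequence of probability measures on Λ with μ-densities pᵢ, and P* a probability measure with μ-density p*, such that pᵢ(λ) → p*(λ) for μ-a.e. λ. Then the SCP solutions satisfy d_TV(p̂ᵢ, p̂*) → 0, i.e. pointwise a.e. convergence of trial-generating densities implies total variation convergence of the SCP solutions. -/
/-!
By Scheffé's lemma, a.e. convergence of the probability densities `pᵢ → p*` upgrades to
`L¹(μ)` convergence. Pushing forward along `Q` cannot increase `L¹` distance, so the data-space
densities converge in `L¹(ν)`. Finally, the SCP density `x ↦ h (Q x) ρ x / τ (Q x)` integrates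
against `μ` exactly like `h` against `ν`, so the SCP solutions are no further apart in `L¹(μ)`
than the data-space densities are in `L¹(ν)`, and total variation is dominated by `L¹` distance.
-/

open MeasureTheory ENNReal Filter

open Topology

section Scheffe

variable {α : Type*} [MeasurableSpace α] {μ : Measure α}

theorem lintegral_tsub_comm_of_lintegral_eq {f g : α → ℝ≥0∞} (hf : AEMeasurable f μ)
    (hg : AEMeasurable g μ) (hfg : ∫⁻ x, f x ∂μ = ∫⁻ x, g x ∂μ) (hg_fin : ∫⁻ x, g x ∂μ ≠ ∞) :
    ∫⁻ x, f x - g x ∂μ = ∫⁻ x, g x - f x ∂μ := by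
  have hmin_fin : ∫⁻ x, min (g x) (f x) ∂μ ≠ ∞ :=
    ne_top_of_le_ne_top hg_fin (lintegral_mono fun x => min_le_left _ _)
  calc ∫⁻ x, f x - g x ∂μ = ∫⁻ x, f x - min (f x) (g x) ∂μ := by simp only [tsub_min]
    _ = ∫⁻ x, f x ∂μ - ∫⁻ x, min (f x) (g x) ∂μ :=
      lintegral_sub' (hf.min hg) (by simpa only [min_comm] using hmin_fin)
        (ae_of_all _ fun x => min_le_left _ _)
    _ = ∫⁻ x, g x ∂μ - ∫⁻ x, min (g x) (f x) ∂μ := by simp only [hfg, min_comm]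
    _ = ∫⁻ x, g x - min (g x) (f x) ∂μ :=
      (lintegral_sub' (hg.min hf) hmin_fin (ae_of_all _ fun x => min_le_left _ _)).symm
    _ = ∫⁻ x, g x - f x ∂μ := by simp only [tsub_min]

theorem tendsto_lintegral_tsub_of_ae_tendsto {ι : Type*} {l : Filter ι} [l.IsCountablyGenerated]
    {f : ι → α → ℝ≥0∞} {g : α → ℝ≥0∞} (hf : ∀ i, AEMeasurable (f i) μ) (hg : AEMeasurable g μ)
    (hg_fin : ∫⁻ x, g x ∂μ ≠ ∞) (hlim : ∀ᵐ x ∂μ, Tendsto (fun i => f i x) l (𝓝 (g x))) :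
    Tendsto (fun i => ∫⁻ x, g x - f i x ∂μ) l (𝓝 0) := by
  have hlim_sub : ∀ᵐ x ∂μ, Tendsto (fun i => g x - f i x) l (𝓝 0) := by
    filter_upwards [hlim, ae_lt_top' hg hg_fin] with x hx hgx
    simpa using ENNReal.Tendsto.sub tendsto_const_nhds hx (Or.inl hgx.ne)
  simpa using tendsto_lintegral_filter_of_dominated_convergence' g
    (.of_forall fun i => hg.sub (hf i)) (.of_forall fun _ => ae_of_all _ fun _ => tsub_le_self)
    hg_fin hlim_sub

theorem tendsto_lintegral_tsub_add_tsub_of_ae_tendsto {ι : Type*} {l : Filter ι}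
    [l.IsCountablyGenerated] {f : ι → α → ℝ≥0∞} {g : α → ℝ≥0∞} (hf : ∀ i, AEMeasurable (f i) μ)
    (hg : AEMeasurable g μ) (hfg : ∀ i, ∫⁻ x, f i x ∂μ = ∫⁻ x, g x ∂μ)
    (hg_fin : ∫⁻ x, g x ∂μ ≠ ∞) (hlim : ∀ᵐ x ∂μ, Tendsto (fun i => f i x) l (𝓝 (g x))) :
    Tendsto (fun i => ∫⁻ x, f i x - g x ∂μ + ∫⁻ x, g x - f i x ∂μ) l (𝓝 0) := by
  have h := tendsto_lintegral_tsub_of_ae_tendsto hf hg hg_fin hlim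
  simp_rw [lintegral_tsub_comm_of_lintegral_eq (hf _) hg (hfg _) hg_fin]
  simpa using h.add h

end Scheffe

section TotalVariation

variable {α : Type*} [MeasurableSpace α]

theorem ENNReal.abs_toReal_sub_toReal_le {a b c : ℝ≥0∞} (hc : c ≠ ∞) (hab : a ≤ b + c)
    (hba : b ≤ a + c) : |a.toReal - b.toReal| ≤ c.toReal := by
  by_cases ha : a = ∞
  · have hb : b = ∞ := by simpa [ha, hc] using hab
    simp [ha, hb]
  have hb : b ≠ ∞ := ne_top_of_le_ne_top (add_ne_top.2 ⟨ha, hc⟩) hba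
  rw [abs_sub_le_iff, sub_le_iff_le_add', sub_le_iff_le_add', ← toReal_add hb hc,
    ← toReal_add ha hc]
  exact ⟨toReal_mono (add_ne_top.2 ⟨hb, hc⟩) hab, toReal_mono (add_ne_top.2 ⟨ha, hc⟩) hba⟩

theorem tvDist_nonneg (P R : Measure α) : 0 ≤ tvDist P R :=
  Real.iSup_nonneg fun _ => abs_nonneg _

theorem tvDist_le_of_forall_le_add {P R : Measure α} {c : ℝ≥0∞} (hc : c ≠ ∞)
    (hPR : ∀ s, MeasurableSet s → P s ≤ R s + c) (hRP : ∀ s, MeasurableSet s → R s ≤ P s + c) :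
    tvDist P R ≤ c.toReal :=
  Real.iSup_le (fun s => ENNReal.abs_toReal_sub_toReal_le hc (hPR s.1 s.2) (hRP s.1 s.2))
    toReal_nonneg

theorem withDensity_apply_le_add_lintegral_tsub {μ : Measure α} {f g : α → ℝ≥0∞}
    (hg : AEMeasurable g μ) {s : Set α} (hs : MeasurableSet s) :
    μ.withDensity f s ≤ μ.withDensity g s + ∫⁻ x, f x - g x ∂μ := by
  rw [withDensity_apply _ hs, withDensity_apply _ hs]
  calc ∫⁻ x in s, f x ∂μ ≤ ∫⁻ x in s, g x + (f x - g x) ∂μ := lintegral_mono fun _ => le_add_tsub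
    _ = ∫⁻ x in s, g x ∂μ + ∫⁻ x in s, f x - g x ∂μ := lintegral_add_left' hg.restrict _
    _ ≤ ∫⁻ x in s, g x ∂μ + ∫⁻ x, f x - g x ∂μ := add_le_add le_rfl (setLIntegral_le_lintegral _ _)

end TotalVariation

section Pushforward

variable {α β : Type*} [MeasurableSpace α] [MeasurableSpace β] {μ : Measure α} {ν : Measure β}
  {Q : α → β}

theorem lintegral_eq_one_of_eq_withDensity {P : Measure α} [IsProbabilityMeasure P]
    {f : α → ℝ≥0∞} (h : P = μ.withDensity f) : ∫⁻ x, f x ∂μ = 1 := by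
  rw [← setLIntegral_univ, ← withDensity_apply _ MeasurableSet.univ, ← h, measure_univ]

theorem lintegral_eq_of_map_withDensity_eq (hQ : Measurable Q) {f : α → ℝ≥0∞} {a : β → ℝ≥0∞}
    (h : (μ.withDensity f).map Q = ν.withDensity a) : ∫⁻ q, a q ∂ν = ∫⁻ x, f x ∂μ := by
  rw [← setLIntegral_univ, ← withDensity_apply _ MeasurableSet.univ, ← h,
    Measure.map_apply hQ MeasurableSet.univ, Set.preimage_univ,
    withDensity_apply _ MeasurableSet.univ, setLIntegral_univ]

theorem lintegral_tsub_le_of_map_withDensity (hQ : Measurable Q) {f g : α → ℝ≥0∞}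
    {a b : β → ℝ≥0∞} (hg : AEMeasurable g μ) (ha : Measurable a) (hb : Measurable b)
    (hfa : (μ.withDensity f).map Q = ν.withDensity a)
    (hgb : (μ.withDensity g).map Q = ν.withDensity b) (hb_fin : ∫⁻ q, b q ∂ν ≠ ∞) :
    ∫⁻ q, a q - b q ∂ν ≤ ∫⁻ x, f x - g x ∂μ := by
  set A := {q | b q ≤ a q}
  have hA : MeasurableSet A := measurableSet_le hb ha
  have hmass : ∀ {h : α → ℝ≥0∞} {c : β → ℝ≥0∞}, (μ.withDensity h).map Q = ν.withDensity c →
      ∫⁻ q in A, c q ∂ν = ∫⁻ x in Q ⁻¹' A, h x ∂μ := fun hc => by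
    rw [← withDensity_apply _ hA, ← hc, Measure.map_apply hQ hA, withDensity_apply _ (hQ hA)]
  have hsupp : (fun q => a q - b q).support ⊆ A := fun q hq =>
    (tsub_pos_iff_lt.1 (pos_iff_ne_zero.2 hq)).le
  calc ∫⁻ q, a q - b q ∂ν = ∫⁻ q in A, a q - b q ∂ν :=
        (setLIntegral_eq_of_support_subset hsupp).symm
    _ = ∫⁻ q in A, a q ∂ν - ∫⁻ q in A, b q ∂ν :=
      lintegral_sub hb (ne_top_of_le_ne_top hb_fin (setLIntegral_le_lintegral _ _))
        (ae_restrict_mem hA)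
    _ = ∫⁻ x in Q ⁻¹' A, f x ∂μ - ∫⁻ x in Q ⁻¹' A, g x ∂μ := by rw [hmass hfa, hmass hgb]
    _ ≤ ∫⁻ x in Q ⁻¹' A, f x - g x ∂μ := lintegral_sub_le' _ _ hg.restrict
    _ ≤ ∫⁻ x, f x - g x ∂μ := setLIntegral_le_lintegral _ _

end Pushforward

noncomputable def scpDensity {α β : Type*} (Q : α → β) (ρ : α → ℝ≥0∞) (τ : β → ℝ≥0∞)
    (h : β → ℝ≥0∞) (x : α) : ℝ≥0∞ :=
  h (Q x) * ρ x / τ (Q x)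

theorem scpDensity_tsub_le {α β : Type*} {Q : α → β} {ρ : α → ℝ≥0∞} {τ : β → ℝ≥0∞}
    (a b : β → ℝ≥0∞) (x : α) :
    scpDensity Q ρ τ a x - scpDensity Q ρ τ b x ≤ scpDensity Q ρ τ (a - b) x := by
  simp only [scpDensity, div_eq_mul_inv, Pi.sub_apply]
  exact le_tsub_mul.trans (by gcongr; exact le_tsub_mul)

theorem Measurable.scpDensity {α β : Type*} [MeasurableSpace α] [MeasurableSpace β]
    {Q : α → β} {ρ : α → ℝ≥0∞} {τ : β → ℝ≥0∞} {h : β → ℝ≥0∞} (hh : Measurable h)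
    (hQ : Measurable Q) (hρ : Measurable ρ) (hτ : Measurable τ) :
    Measurable (scpDensity Q ρ τ h) :=
  ((hh.comp hQ).mul hρ).div (hτ.comp hQ)

section SCP

variable {α β : Type*} [MeasurableSpace α] [MeasurableSpace β] {μ : Measure α} {ν : Measure β}
  {Q : α → β} {ρ : α → ℝ≥0∞} {τ : β → ℝ≥0∞}

theorem lintegral_scpDensity (hQ : Measurable Q) (hρ : Measurable ρ) (hτ : Measurable τ)
    (hτmap : (μ.withDensity ρ).map Q = ν.withDensity τ) (hτ_ne_zero : ∀ᵐ q ∂ν, τ q ≠ 0)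
    (hτ_ne_top : ∀ᵐ q ∂ν, τ q ≠ ∞) {h : β → ℝ≥0∞} (hh : Measurable h) :
    ∫⁻ x, scpDensity Q ρ τ h x ∂μ = ∫⁻ q, h q ∂ν := by
  have hhτ : Measurable fun q => h q / τ q := hh.div hτ
  calc ∫⁻ x, scpDensity Q ρ τ h x ∂μ = ∫⁻ x, (ρ * fun x => h (Q x) / τ (Q x)) x ∂μ := by
        simp only [scpDensity, Pi.mul_apply, mul_comm (h _), mul_div_assoc]
    _ = ∫⁻ x, h (Q x) / τ (Q x) ∂μ.withDensity ρ :=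
      (lintegral_withDensity_eq_lintegral_mul μ hρ (hhτ.comp hQ)).symm
    _ = ∫⁻ q, (τ * fun q => h q / τ q) q ∂ν := by
      rw [← lintegral_map hhτ hQ, hτmap, lintegral_withDensity_eq_lintegral_mul ν hτ hhτ]
    _ = ∫⁻ q, h q ∂ν := lintegral_congr_ae <| by
      filter_upwards [hτ_ne_zero, hτ_ne_top] with q h0 htop
      exact ENNReal.mul_div_cancel h0 htop

/-- The SCP update is an `L¹` contraction of trial-generating densities. -/
theorem lintegral_scpDensity_tsub_le (hQ : Measurable Q) (hρ : Measurable ρ) (hτ : Measurable τ)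
    (hτmap : (μ.withDensity ρ).map Q = ν.withDensity τ) (hτ_ne_zero : ∀ᵐ q ∂ν, τ q ≠ 0)
    (hτ_ne_top : ∀ᵐ q ∂ν, τ q ≠ ∞) {f g : α → ℝ≥0∞} {a b : β → ℝ≥0∞} (hg : AEMeasurable g μ)
    (ha : Measurable a) (hb : Measurable b) (hfa : (μ.withDensity f).map Q = ν.withDensity a)
    (hgb : (μ.withDensity g).map Q = ν.withDensity b) (hb_fin : ∫⁻ q, b q ∂ν ≠ ∞) :
    ∫⁻ x, scpDensity Q ρ τ a x - scpDensity Q ρ τ b x ∂μ ≤ ∫⁻ x, f x - g x ∂μ :=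
  calc ∫⁻ x, scpDensity Q ρ τ a x - scpDensity Q ρ τ b x ∂μ
      ≤ ∫⁻ x, scpDensity Q ρ τ (a - b) x ∂μ := lintegral_mono fun x => scpDensity_tsub_le a b x
    _ = ∫⁻ q, a q - b q ∂ν :=
      lintegral_scpDensity hQ hρ hτ hτmap hτ_ne_zero hτ_ne_top (ha.sub hb)
    _ ≤ ∫⁻ x, f x - g x ∂μ := lintegral_tsub_le_of_map_withDensity hQ hg ha hb hfa hgb hb_fin

theorem withDensity_scpDensity_apply_le_add (hQ : Measurable Q) (hρ : Measurable ρ)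
    (hτ : Measurable τ) (hτmap : (μ.withDensity ρ).map Q = ν.withDensity τ)
    (hτ_ne_zero : ∀ᵐ q ∂ν, τ q ≠ 0) (hτ_ne_top : ∀ᵐ q ∂ν, τ q ≠ ∞) {f g : α → ℝ≥0∞}
    {a b : β → ℝ≥0∞} (hg : AEMeasurable g μ) (ha : Measurable a) (hb : Measurable b)
    (hfa : (μ.withDensity f).map Q = ν.withDensity a)
    (hgb : (μ.withDensity g).map Q = ν.withDensity b) (hg_fin : ∫⁻ x, g x ∂μ ≠ ∞)
    {s : Set α} (hs : MeasurableSet s) :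
    μ.withDensity (scpDensity Q ρ τ a) s ≤
      μ.withDensity (scpDensity Q ρ τ b) s + ∫⁻ x, f x - g x ∂μ :=
  (withDensity_apply_le_add_lintegral_tsub (hb.scpDensity hQ hρ hτ).aemeasurable hs).trans <|
    add_le_add le_rfl <| lintegral_scpDensity_tsub_le hQ hρ hτ hτmap hτ_ne_zero hτ_ne_top hg ha hb
      hfa hgb (lintegral_eq_of_map_withDensity_eq hQ hgb ▸ hg_fin)

end SCP

theorem scp_local_limit_general
    {Λ 𝒟 : Type*} [MeasurableSpace Λ] [MeasurableSpace 𝒟]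
    (Q : Λ → 𝒟) (hQ : Measurable Q)
    (μ : Measure Λ) (ν : Measure 𝒟)
    (P : ℕ → Measure Λ) (Pstar : Measure Λ)
    [∀ i, IsProbabilityMeasure (P i)] [IsProbabilityMeasure Pstar]
    (pLam : ℕ → Λ → ℝ≥0∞) (pLamStar : Λ → ℝ≥0∞)
    (hpLam : ∀ i, Measurable (pLam i)) (hpLamStar : Measurable pLamStar)
    (hPdens : ∀ i, P i = μ.withDensity (pLam i))
    (hPstarDens : Pstar = μ.withDensity pLamStar)
    (ρD : ℕ → 𝒟 → ℝ≥0∞) (ρDstar : 𝒟 → ℝ≥0∞)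
    (hρD : ∀ i, Measurable (ρD i)) (hρDstar : Measurable ρDstar)
    (hmap : ∀ i, (P i).map Q = ν.withDensity (ρD i))
    (hmapStar : Pstar.map Q = ν.withDensity ρDstar)
    (ρp : Λ → ℝ≥0∞) (hρp : Measurable ρp) (hρp1 : ∫⁻ l, ρp l ∂μ = 1)
    (τ : 𝒟 → ℝ≥0∞) (hτ : Measurable τ)
    (hτmap : (μ.withDensity ρp).map Q = ν.withDensity τ)
    (hτpos : ∀ᵐ q ∂ν, 0 < τ q)
    (hconv : ∀ᵐ l ∂μ, Tendsto (fun i => pLam i l) atTop (nhds (pLamStar l))) :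
    Tendsto (fun i =>
        tvDist (μ.withDensity (fun l => ρD i (Q l) * ρp l / τ (Q l)))
               (μ.withDensity (fun l => ρDstar (Q l) * ρp l / τ (Q l))))
      atTop (nhds 0) := by
  have hp_one : ∀ i, ∫⁻ l, pLam i l ∂μ = 1 := fun i => lintegral_eq_one_of_eq_withDensity (hPdens i)
  have hpStar_one : ∫⁻ l, pLamStar l ∂μ = 1 := lintegral_eq_one_of_eq_withDensity hPstarDens
  have hτ_ne_top : ∀ᵐ q ∂ν, τ q ≠ ∞ :=
    (ae_lt_top hτ (by simp [lintegral_eq_of_map_withDensity_eq hQ hτmap, hρp1])).mono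
      fun _ => ne_of_lt
  have hbound := @withDensity_scpDensity_apply_le_add _ _ _ _ μ ν Q ρp τ hQ hρp hτ hτmap
    (hτpos.mono fun _ => ne_of_gt) hτ_ne_top
  set c : ℕ → ℝ≥0∞ := fun i =>
    ∫⁻ l, pLam i l - pLamStar l ∂μ + ∫⁻ l, pLamStar l - pLam i l ∂μ
  have hc : Tendsto c atTop (𝓝 0) := tendsto_lintegral_tsub_add_tsub_of_ae_tendsto
    (fun i => (hpLam i).aemeasurable) hpLamStar.aemeasurable
    (fun i => (hp_one i).trans hpStar_one.symm) (by simp [hpStar_one]) hconv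
  refine squeeze_zero' (.of_forall fun i => tvDist_nonneg _ _) ?_
    (by simpa using (ENNReal.tendsto_toReal zero_ne_top).comp hc)
  filter_upwards [hc.eventually (gt_mem_nhds zero_lt_top)] with i hci
  exact tvDist_le_of_forall_le_add hci.ne
    (fun s hs => (hbound hpLamStar.aemeasurable (hρD i) hρDstar (hPdens i ▸ hmap i)
      (hPstarDens ▸ hmapStar) (by simp [hpStar_one]) hs).trans (add_le_add le_rfl le_self_add))
    (fun s hs => (hbound (hpLam i).aemeasurable hρDstar (hρD i) (hPstarDens ▸ hmapStar)
      (hPdens i ▸ hmap i) (by simp [hp_one]) hs).trans (add_le_add le_rfl le_add_self))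

/-- Local limit theorem: pointwise a.e. convergence of
trial-generating densities implies TV convergence of the SCP solutions. -/
theorem scp_local_limit
    {Λ 𝒟 : Type*} [MeasurableSpace Λ] [MeasurableSpace 𝒟]
    (Q : Λ → 𝒟) (hQ : Measurable Q)
    (μ : Measure Λ) [SigmaFinite μ] (ν : Measure 𝒟) [SigmaFinite ν]
    (P : ℕ → Measure Λ) (Pstar : Measure Λ)
    [∀ i, IsProbabilityMeasure (P i)] [IsProbabilityMeasure Pstar]
    (pLam : ℕ → Λ → ℝ≥0∞) (pLamStar : Λ → ℝ≥0∞)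
    (hpLam : ∀ i, Measurable (pLam i)) (hpLamStar : Measurable pLamStar)
    (hPdens : ∀ i, P i = μ.withDensity (pLam i))
    (hPstarDens : Pstar = μ.withDensity pLamStar)
    (ρD : ℕ → 𝒟 → ℝ≥0∞) (ρDstar : 𝒟 → ℝ≥0∞)
    (hρD : ∀ i, Measurable (ρD i)) (hρDstar : Measurable ρDstar)
    (hmap : ∀ i, (P i).map Q = ν.withDensity (ρD i))
    (hmapStar : Pstar.map Q = ν.withDensity ρDstar)
    (ρp : Λ → ℝ≥0∞) (hρp : Measurable ρp) (hρp1 : ∫⁻ l, ρp l ∂μ = 1)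
    (τ : 𝒟 → ℝ≥0∞) (hτ : Measurable τ)
    (hτmap : (μ.withDensity ρp).map Q = ν.withDensity τ)
    (hτpos : ∀ᵐ q ∂ν, 0 < τ q)
    (hconv : ∀ᵐ l ∂μ, Tendsto (fun i => pLam i l) atTop (nhds (pLamStar l))) :
    Tendsto (fun i =>
        tvDist (μ.withDensity (fun l => ρD i (Q l) * ρp l / τ (Q l)))
               (μ.withDensity (fun l => ρDstar (Q l) * ρp l / τ (Q l))))
      atTop (nhds 0) :=
  scp_local_limit_general Q hQ μ ν P Pstar pLam pLamStar hpLam hpLamStar hPdens hPstarDens ρD ρDstar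
    hρD hρDstar hmap hmapStar ρp hρp hρp1 τ hτ hτmap hτpos hconv
end

section
/- Let τ : 𝒟 → [0,∞) be continuous on a metric space 𝒟, and ν* a Borel probability measure with ν*({τ = 0}) = 0. If νᵢ → ν* weakly and gᵢ, g are bounded Borel functions with |g| ≤ C·τ pointwise (for some C > 0), setting h_k = (g/τ)·χ_{{τ > 1/k}}, then for every ε > 0 there exists k with: (a) |∫ h_k dν* − L*| ≤ ε where L* = ∫_{τ>0} (g/τ) dν*, and (b) limsup_i |∫ h_k dνᵢ − ∫_{τ>0} (g/τ) dνᵢ| ≤ ε, provided each νᵢ({τ = 0}) = 0. -/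
/-! On `{τ > 0}` the ratio `g / τ` is bounded by `C`, so for every finite measure `μ` the
truncation error at level `1 / k` is at most `C * μ {τ ≤ 1 / k}`. For `ν*` this tends to
`ν* {τ = 0} = 0` by continuity from above, which fixes `k`; for the `νᵢ` the portmanteau theorem
applied to the closed set `{τ ≤ 1 / k}` gives `limsup νᵢ {τ ≤ 1 / k} ≤ ν* {τ ≤ 1 / k}`, so the
same `k` works. -/

open MeasureTheory Filter Set Topology

lemma abs_div_le_of_abs_le_mul {a b C : ℝ} (hC : 0 ≤ C) (h : |a| ≤ C * b) : |a / b| ≤ C := by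
  rcases lt_trichotomy b 0 with hb | rfl | hb
  · have ha : a = 0 := abs_nonpos_iff.mp (h.trans (mul_nonpos_of_nonneg_of_nonpos hC hb.le))
    simpa [ha] using hC
  · simpa using hC
  · rwa [abs_div, abs_of_pos hb, div_le_iff₀ hb]

lemma tendsto_one_div_natCast_nhdsGT_zero :
    Tendsto (fun k : ℕ => 1 / (k : ℝ)) atTop (𝓝[>] 0) := by
  simpa only [one_div, Function.comp_def] using
    tendsto_inv_atTop_nhdsGT_zero.comp tendsto_natCast_atTop_atTop

namespace MeasureTheory

section FiniteMeasure

variable {α : Type*} [MeasurableSpace α] {μ : Measure α} [IsFiniteMeasure μ]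

lemma abs_setIntegral_sub_setIntegral_le_of_subset {f : α → ℝ} {C : ℝ} {s t : Set α}
    (hf : IntegrableOn f t μ) (hfC : ∀ x, |f x| ≤ C) (hs : MeasurableSet s) (hst : s ⊆ t) :
    |∫ x in s, f x ∂μ - ∫ x in t, f x ∂μ| ≤ C * μ.real (t \ s) := by
  rw [abs_sub_comm, ← setIntegral_sdiff hs hf hst]
  exact norm_setIntegral_le_of_norm_le_const (measure_lt_top μ _)
    fun x _ => (Real.norm_eq_abs _).trans_le (hfC x)

lemma abs_integral_indicator_sub_setIntegral_pos_le {τ f : α → ℝ} {C c : ℝ}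
    (hτ : Measurable τ) (hf : Measurable f) (hC : 0 ≤ C) (hfC : ∀ x, |f x| ≤ C) (hc : 0 ≤ c) :
    |∫ x, {x | c < τ x}.indicator f x ∂μ - ∫ x in {x | 0 < τ x}, f x ∂μ|
      ≤ C * μ.real {x | τ x ≤ c} := by
  have hint : Integrable f μ := .of_bound hf.aestronglyMeasurable C (.of_forall hfC)
  have hmeas : MeasurableSet {x | c < τ x} := measurableSet_lt measurable_const hτ
  rw [integral_indicator hmeas]
  refine (abs_setIntegral_sub_setIntegral_le_of_subset hint.integrableOn hfC hmeas
    fun x hx => hc.trans_lt hx).trans ?_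
  exact mul_le_mul_of_nonneg_left
    (measureReal_mono fun x hx => show τ x ≤ c from not_lt.mp hx.2) hC

lemma tendsto_measure_setOf_le_nhdsGT {τ : α → ℝ} (hτ : Measurable τ) (a : ℝ) :
    Tendsto (fun c => μ {x | τ x ≤ c}) (𝓝[>] a) (𝓝 (μ {x | τ x ≤ a})) := by
  have h := tendsto_measure_biInter_gt (μ := μ) (s := fun c => {x | τ x ≤ c}) (a := a)
    (fun _ _ => (measurableSet_le hτ measurable_const).nullMeasurableSet)
    (fun _ _ _ hij _ hx => le_trans hx hij) ⟨a + 1, by linarith, measure_ne_top _ _⟩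
  rwa [show ⋂ r > a, {x | τ x ≤ r} = {x | τ x ≤ a} by
    ext x; simpa using forall_gt_imp_ge_iff_le_of_dense] at h

end FiniteMeasure

lemma mul_measureReal_le_of_le_ofReal {α : Type*} [MeasurableSpace α] {μ : Measure α}
    {s : Set α} {C ε : ℝ} (hC : 0 < C) (hε : 0 ≤ ε) (h : μ s ≤ ENNReal.ofReal (ε / C)) :
    C * μ.real s ≤ ε :=
  calc C * μ.real s ≤ C * (ε / C) := by
        gcongr; exact ENNReal.toReal_le_of_le_ofReal (by positivity) h
    _ = ε := mul_div_cancel₀ _ hC.ne'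

lemma ProbabilityMeasure.tendsto_of_forall_integral_tendsto {Ω ι : Type*} [MeasurableSpace Ω]
    [TopologicalSpace Ω] [OpensMeasurableSpace Ω] {L : Filter ι}
    {μs : ι → ProbabilityMeasure Ω} {μ : ProbabilityMeasure Ω}
    (h : ∀ f : Ω → ℝ, Continuous f → (∃ C, ∀ x, |f x| ≤ C) →
      Tendsto (fun i => ∫ x, f x ∂(μs i : Measure Ω)) L (𝓝 (∫ x, f x ∂(μ : Measure Ω)))) :
    Tendsto μs L (𝓝 μ) :=
  ProbabilityMeasure.tendsto_iff_forall_integral_tendsto.mpr fun f =>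
    h f f.continuous ⟨‖f‖, f.norm_coe_le_norm⟩

end MeasureTheory

theorem truncation_lemma_general
    {𝒟 : Type*} [MetricSpace 𝒟] [MeasurableSpace 𝒟] [BorelSpace 𝒟]
    (τ : 𝒟 → ℝ) (hτcont : Continuous τ) (hτ0 : ∀ q, 0 ≤ τ q)
    (ν : ℕ → Measure 𝒟) (νstar : Measure 𝒟)
    [∀ i, IsProbabilityMeasure (ν i)] [IsProbabilityMeasure νstar]
    (hνstarnull : νstar {q | τ q = 0} = 0)
    (hconv : ∀ f : 𝒟 → ℝ, Continuous f → (∃ C, ∀ q, |f q| ≤ C) →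
      Tendsto (fun i => ∫ q, f q ∂(ν i)) atTop (nhds (∫ q, f q ∂νstar)))
    (g : 𝒟 → ℝ) (hg : Measurable g) (C : ℝ) (hC : 0 < C)
    (hgbound : ∀ q, |g q| ≤ C * τ q) :
    ∀ ε > (0 : ℝ), ∃ k : ℕ, 0 < k ∧
      |(∫ q, Set.indicator {q | 1 / (k : ℝ) < τ q} (fun q => g q / τ q) q ∂νstar) -
        ∫ q in {q | 0 < τ q}, g q / τ q ∂νstar| ≤ ε ∧
      limsup (fun i =>
        |(∫ q, Set.indicator {q | 1 / (k : ℝ) < τ q} (fun q => g q / τ q) q ∂(ν i)) -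
          ∫ q in {q | 0 < τ q}, g q / τ q ∂(ν i)|) atTop ≤ ε := by
  intro ε hε
  have hnull : νstar {q | τ q ≤ 0} = 0 :=
    measure_mono_null (fun q hq => le_antisymm hq (hτ0 q)) hνstarnull
  have hsmall : Tendsto (fun k : ℕ => νstar {q | τ q ≤ 1 / k}) atTop (𝓝 0) :=
    hnull ▸ (tendsto_measure_setOf_le_nhdsGT hτcont.measurable 0).comp
      tendsto_one_div_natCast_nhdsGT_zero
  obtain ⟨k, hk, hkpos⟩ := ((hsmall.eventually_lt_const (ENNReal.ofReal_pos.mpr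
    (div_pos hε hC))).and (eventually_gt_atTop 0)).exists
  have htrunc (μ : Measure 𝒟) [IsFiniteMeasure μ] :
      |∫ q, {q | 1 / (k : ℝ) < τ q}.indicator (fun q => g q / τ q) q ∂μ -
        ∫ q in {q | 0 < τ q}, g q / τ q ∂μ| ≤ C * μ.real {q | τ q ≤ 1 / k} :=
    abs_integral_indicator_sub_setIntegral_pos_le hτcont.measurable
      (hg.div hτcont.measurable) hC.le (fun q => abs_div_le_of_abs_le_mul hC.le (hgbound q))
      (by positivity)
  refine ⟨k, hkpos, (htrunc νstar).trans (mul_measureReal_le_of_le_ofReal hC hε.le hk.le), ?_⟩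
  let μs (i : ℕ) : ProbabilityMeasure 𝒟 := ⟨ν i, inferInstance⟩
  have hweak : Tendsto μs atTop (𝓝 ⟨νstar, inferInstance⟩) :=
    ProbabilityMeasure.tendsto_of_forall_integral_tendsto hconv
  have hport := ProbabilityMeasure.limsup_measure_closed_le_of_tendsto hweak
    (F := {q | τ q ≤ 1 / k}) (isClosed_le hτcont continuous_const)
  have hev := eventually_lt_of_limsup_lt (hport.trans_lt hk)
  exact limsup_le_of_le (isCoboundedUnder_le_of_le atTop fun i => abs_nonneg _)
    (hev.mono fun i hi => (htrunc (ν i)).trans (mul_measureReal_le_of_le_ofReal hC hε.le hi.le))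

/-- truncation lemma for ratios g/τ under weak convergence. -/
theorem truncation_lemma
    {𝒟 : Type*} [MetricSpace 𝒟] [MeasurableSpace 𝒟] [BorelSpace 𝒟]
    (τ : 𝒟 → ℝ) (hτcont : Continuous τ) (hτ0 : ∀ q, 0 ≤ τ q)
    (ν : ℕ → Measure 𝒟) (νstar : Measure 𝒟)
    [∀ i, IsProbabilityMeasure (ν i)] [IsProbabilityMeasure νstar]
    (hνstarnull : νstar {q | τ q = 0} = 0)
    (hνnull : ∀ i, ν i {q | τ q = 0} = 0)
    (hconv : ∀ f : 𝒟 → ℝ, Continuous f → (∃ C, ∀ q, |f q| ≤ C) →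
      Tendsto (fun i => ∫ q, f q ∂(ν i)) atTop (nhds (∫ q, f q ∂νstar)))
    (g : 𝒟 → ℝ) (hg : Measurable g) (C : ℝ) (hC : 0 < C)
    (hgbound : ∀ q, |g q| ≤ C * τ q) :
    ∀ ε > (0 : ℝ), ∃ k : ℕ, 0 < k ∧
      |(∫ q, Set.indicator {q | 1 / (k : ℝ) < τ q} (fun q => g q / τ q) q ∂νstar) -
        ∫ q in {q | 0 < τ q}, g q / τ q ∂νstar| ≤ ε ∧
      limsup (fun i =>
        |(∫ q, Set.indicator {q | 1 / (k : ℝ) < τ q} (fun q => g q / τ q) q ∂(ν i)) -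
          ∫ q in {q | 0 < τ q}, g q / τ q ∂(ν i)|) atTop ≤ ε :=
  truncation_lemma_general τ hτcont hτ0 ν νstar hνstarnull hconv g hg C hC hgbound
end
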